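/- arXiv:math/0003142 — 2 statements merged into one kernel-verified Lean document; each statement's English description precedes it below -/
import Mathlib

section
/- The bracket on smooth functions on the dual of a finite-dimensional real Lie algebra 𝔤, defined by {f₁,f₂}(λ) = ⟨[(df₁)_λ, (df₂)_λ], λ⟩ (where differentials at λ ∈ 𝔤* are identified with elements of 𝔤), satisfies the Jacobi identity. -/
/- We model a finite-dimensional real Lie algebra 𝔤 as a finite-dimensional real
normed space `L` (all norms are equivalent, and the topology is needed only to speak
of differentials) equipped with a bilinear bracket `brk` satisfying the Lie algebra
axioms. Points of 𝔤* are continuous linear functionals `L →L[ℝ] ℝ`; the differential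
of `f : 𝔤* → ℝ` at `λ` is identified with an element of `L` via reflexivity. -/

/-- `brk` is a Lie bracket: alternating and satisfying the Jacobi identity. -/
def IsLieBracket {L : Type*} [NormedAddCommGroup L] [NormedSpace ℝ L]
    (brk : L →ₗ[ℝ] L →ₗ[ℝ] L) : Prop :=
  (∀ x, brk x x = 0) ∧
  (∀ x y z, brk (brk x y) z + brk (brk y z) x + brk (brk z x) y = 0)

/-- The element of 𝔤 corresponding to the differential `(df)_λ ∈ (𝔤*)* ≃ 𝔤`. -/
noncomputable def lieGrad {L : Type*} [NormedAddCommGroup L] [NormedSpace ℝ L]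
    [FiniteDimensional ℝ L] (f : (L →L[ℝ] ℝ) → ℝ) (lam : L →L[ℝ] ℝ) : L :=
  (Module.evalEquiv ℝ L).symm
    ((fderiv ℝ f lam).toLinearMap ∘ₗ
      (LinearMap.toContinuousLinearMap : Module.Dual ℝ L ≃ₗ[ℝ] (L →L[ℝ] ℝ)).toLinearMap)

/-- The Lie–Poisson bracket {f₁,f₂}(λ) = ⟨[(df₁)_λ,(df₂)_λ], λ⟩. -/
noncomputable def liePoisson {L : Type*} [NormedAddCommGroup L] [NormedSpace ℝ L]
    [FiniteDimensional ℝ L] (brk : L →ₗ[ℝ] L →ₗ[ℝ] L)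
    (f₁ f₂ : (L →L[ℝ] ℝ) → ℝ) (lam : L →L[ℝ] ℝ) : ℝ :=
  lam (brk (lieGrad f₁ lam) (lieGrad f₂ lam))

section Aux
variable {L : Type*} [NormedAddCommGroup L] [NormedSpace ℝ L] [FiniteDimensional ℝ L]

/-- Linear map from the continuous double dual back to `L`, via reflexivity. -/
noncomputable def dualToL : ((L →L[ℝ] ℝ) →L[ℝ] ℝ) →ₗ[ℝ] L where
  toFun g := (Module.evalEquiv ℝ L).symm
    (g.toLinearMap ∘ₗ
      (LinearMap.toContinuousLinearMap : Module.Dual ℝ L ≃ₗ[ℝ] (L →L[ℝ] ℝ)).toLinearMap)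
  map_add' g g' := by
    simp only [ContinuousLinearMap.coe_add, LinearMap.add_comp, map_add]
  map_smul' c g := by
    simp only [ContinuousLinearMap.coe_smul, LinearMap.smul_comp, map_smul, RingHom.id_apply]

lemma eval_dualToL (g : (L →L[ℝ] ℝ) →L[ℝ] ℝ) (μ : L →L[ℝ] ℝ) :
    μ (dualToL g) = g μ := by
  have h : (LinearMap.toContinuousLinearMap (μ.toLinearMap) : L →L[ℝ] ℝ) = μ := by
    ext x; rw [LinearMap.coe_toContinuousLinearMap']; rfl
  change μ.toLinearMap _ = _
  rw [dualToL]
  simp only [LinearMap.coe_mk, AddHom.coe_mk, Module.apply_evalEquiv_symm_apply,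
    LinearMap.comp_apply]
  rw [LinearEquiv.coe_coe, h]
  rfl

/-- Continuous version of `dualToL`. -/
noncomputable def dualToLC : ((L →L[ℝ] ℝ) →L[ℝ] ℝ) →L[ℝ] L :=
  LinearMap.toContinuousLinearMap (𝕜 := ℝ) (E := ((L →L[ℝ] ℝ) →L[ℝ] ℝ)) (F' := L) dualToL

lemma eval_dualToLC (g : (L →L[ℝ] ℝ) →L[ℝ] ℝ) (μ : L →L[ℝ] ℝ) :
    μ (dualToLC g) = g μ := by
  rw [dualToLC, LinearMap.coe_toContinuousLinearMap']; exact eval_dualToL g μ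

lemma lieGrad_eq (f : (L →L[ℝ] ℝ) → ℝ) (lam : L →L[ℝ] ℝ) :
    lieGrad f lam = dualToLC (fderiv ℝ f lam) := by
  rw [dualToLC, LinearMap.coe_toContinuousLinearMap']; rfl

lemma eval_lieGrad (f : (L →L[ℝ] ℝ) → ℝ) (lam μ : L →L[ℝ] ℝ) :
    μ (lieGrad f lam) = fderiv ℝ f lam μ := by
  rw [lieGrad_eq]; exact eval_dualToLC _ _

/-- Continuous version of the bracket. -/
noncomputable def brkC (brk : L →ₗ[ℝ] L →ₗ[ℝ] L) : L →L[ℝ] L →L[ℝ] L :=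
  LinearMap.toContinuousLinearMap
    (((LinearMap.toContinuousLinearMap : (L →ₗ[ℝ] L) ≃ₗ[ℝ] (L →L[ℝ] L)) :
        (L →ₗ[ℝ] L) →ₗ[ℝ] (L →L[ℝ] L)) ∘ₗ brk)

lemma brkC_apply (brk : L →ₗ[ℝ] L →ₗ[ℝ] L) (x y : L) : brkC brk x y = brk x y := by
  rw [brkC, LinearMap.coe_toContinuousLinearMap']
  rfl

lemma hasFDerivAt_lieGrad (f : (L →L[ℝ] ℝ) → ℝ) (hf : ContDiff ℝ (⊤ : ℕ∞) f) (lam : L →L[ℝ] ℝ) :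
    HasFDerivAt (lieGrad f)
      (dualToLC.comp (fderiv ℝ (fderiv ℝ f) lam)) lam := by
  have hdf : DifferentiableAt ℝ (fderiv ℝ f) lam := by
    have : ContDiff ℝ 1 (fderiv ℝ f) := hf.fderiv_right (WithTop.coe_le_coe.mpr le_top)
    exact (this.differentiable one_ne_zero) lam
  exact HasFDerivAt.comp (𝕜 := ℝ) (F := (L →L[ℝ] ℝ) →L[ℝ] ℝ) lam dualToLC.hasFDerivAt hdf.hasFDerivAt

lemma hasFDerivAt_liePoisson (brk : L →ₗ[ℝ] L →ₗ[ℝ] L) (f g : (L →L[ℝ] ℝ) → ℝ)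
    (hf : ContDiff ℝ (⊤ : ℕ∞) f) (hg : ContDiff ℝ (⊤ : ℕ∞) g) (lam : L →L[ℝ] ℝ) :
    HasFDerivAt (liePoisson brk f g)
      (lam.comp ((brkC brk (lieGrad f lam)).comp
            (dualToLC.comp (fderiv ℝ (fderiv ℝ g) lam))
          + ((brkC brk).comp (dualToLC.comp (fderiv ℝ (fderiv ℝ f) lam))).flip
              (lieGrad g lam))
        + (ContinuousLinearMap.id ℝ (L →L[ℝ] ℝ)).flip
            (brkC brk (lieGrad f lam) (lieGrad g lam))) lam := by
  have h1 := hasFDerivAt_lieGrad f hf lam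
  have h2 := hasFDerivAt_lieGrad g hg lam
  have hc := (brkC brk).hasFDerivAt.comp lam h1
  have hu := hc.clm_apply h2
  exact (hasFDerivAt_id lam).clm_apply hu

lemma fderiv_liePoisson_apply (brk : L →ₗ[ℝ] L →ₗ[ℝ] L) (f g : (L →L[ℝ] ℝ) → ℝ)
    (hf : ContDiff ℝ (⊤ : ℕ∞) f) (hg : ContDiff ℝ (⊤ : ℕ∞) g) (lam ξ : L →L[ℝ] ℝ) :
    fderiv ℝ (liePoisson brk f g) lam ξ =
      ξ (brk (lieGrad f lam) (lieGrad g lam))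
      + lam (brk (dualToLC (fderiv ℝ (fderiv ℝ f) lam ξ)) (lieGrad g lam))
      + lam (brk (lieGrad f lam) (dualToLC (fderiv ℝ (fderiv ℝ g) lam ξ))) := by
  rw [(hasFDerivAt_liePoisson brk f g hf hg lam).fderiv]
  simp only [ContinuousLinearMap.add_apply, ContinuousLinearMap.comp_apply,
    ContinuousLinearMap.flip_apply, ContinuousLinearMap.coe_id', id_eq, brkC_apply, map_add]
  ring

end Aux

/-- the Lie–Poisson bracket on smooth functions on 𝔤* satisfies the
Jacobi identity. -/
theorem liePoisson_jacobi {L : Type*} [NormedAddCommGroup L] [NormedSpace ℝ L]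
    [FiniteDimensional ℝ L] (brk : L →ₗ[ℝ] L →ₗ[ℝ] L) (hbrk : IsLieBracket brk)
    (f₁ f₂ f₃ : (L →L[ℝ] ℝ) → ℝ)
    (h₁ : ContDiff ℝ (⊤ : ℕ∞) f₁) (h₂ : ContDiff ℝ (⊤ : ℕ∞) f₂) (h₃ : ContDiff ℝ (⊤ : ℕ∞) f₃)
    (lam : L →L[ℝ] ℝ) :
    liePoisson brk (liePoisson brk f₁ f₂) f₃ lam
      + liePoisson brk (liePoisson brk f₂ f₃) f₁ lam
      + liePoisson brk (liePoisson brk f₃ f₁) f₂ lam = 0 := by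
  obtain ⟨halt, hjac⟩ := hbrk
  -- antisymmetry of the bracket
  have skew : ∀ x y : L, brk x y = - brk y x := by
    intro x y
    have h := halt (x + y)
    simp only [map_add, LinearMap.add_apply, halt x, halt y, zero_add, add_zero] at h
    -- h : brk x y + brk y x = 0
    exact eq_neg_of_add_eq_zero_left (by linear_combination (norm := module) h)
  -- the functional ξ_Z = λ([·, Z])
  set Xi : L → (L →L[ℝ] ℝ) := fun Z => lam.comp ((brkC brk).flip Z) with hXi
  have Xi_apply : ∀ (Z : L) (V : L), Xi Z V = lam (brk V Z) := by
    intro Z V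
    simp only [hXi, ContinuousLinearMap.comp_apply, ContinuousLinearMap.flip_apply, brkC_apply]
  set X₁ := lieGrad f₁ lam
  set X₂ := lieGrad f₂ lam
  set X₃ := lieGrad f₃ lam
  -- second derivatives are symmetric
  have sym : ∀ (f : (L →L[ℝ] ℝ) → ℝ), ContDiff ℝ (⊤ : ℕ∞) f → ∀ μ ν,
      fderiv ℝ (fderiv ℝ f) lam μ ν = fderiv ℝ (fderiv ℝ f) lam ν μ := by
    intro f hf μ ν
    exact hf.contDiffAt.isSymmSndFDerivAt (by rw [minSmoothness_of_isRCLikeNormedField]; exact WithTop.coe_le_coe.mpr le_top) μ ν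
  -- expansion of an iterated bracket
  have expand : ∀ (f g : (L →L[ℝ] ℝ) → ℝ), ContDiff ℝ (⊤ : ℕ∞) f → ContDiff ℝ (⊤ : ℕ∞) g → ∀ Z : L,
      lam (brk (lieGrad (liePoisson brk f g) lam) Z) =
        lam (brk (brk (lieGrad f lam) (lieGrad g lam)) Z)
        + fderiv ℝ (fderiv ℝ f) lam (Xi Z) (Xi (lieGrad g lam))
        - fderiv ℝ (fderiv ℝ g) lam (Xi Z) (Xi (lieGrad f lam)) := by
    intro f g hf hg Z
    have h0 : lam (brk (lieGrad (liePoisson brk f g) lam) Z)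
        = Xi Z (lieGrad (liePoisson brk f g) lam) := (Xi_apply _ _).symm
    rw [h0, eval_lieGrad, fderiv_liePoisson_apply brk f g hf hg lam (Xi Z)]
    rw [Xi_apply]
    have t2 : lam (brk (dualToLC (fderiv ℝ (fderiv ℝ f) lam (Xi Z))) (lieGrad g lam))
        = fderiv ℝ (fderiv ℝ f) lam (Xi Z) (Xi (lieGrad g lam)) := by
      rw [← Xi_apply, eval_dualToLC]
    have t3 : lam (brk (lieGrad f lam) (dualToLC (fderiv ℝ (fderiv ℝ g) lam (Xi Z))))
        = - fderiv ℝ (fderiv ℝ g) lam (Xi Z) (Xi (lieGrad f lam)) := by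
      rw [skew, map_neg, ← Xi_apply, eval_dualToLC]
    rw [t2, t3]
    ring
  have e12 := expand f₁ f₂ h₁ h₂ X₃
  have e23 := expand f₂ f₃ h₂ h₃ X₁
  have e31 := expand f₃ f₁ h₃ h₁ X₂
  have hLP : ∀ (f g h : (L →L[ℝ] ℝ) → ℝ),
      liePoisson brk (liePoisson brk f g) h lam
        = lam (brk (lieGrad (liePoisson brk f g) lam) (lieGrad h lam)) := fun _ _ _ => rfl
  rw [hLP f₁ f₂ f₃, hLP f₂ f₃ f₁, hLP f₃ f₁ f₂, e12, e23, e31]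
  have hs₁ := sym f₁ h₁ (Xi X₃) (Xi X₂)
  have hs₂ := sym f₂ h₂ (Xi X₁) (Xi X₃)
  have hs₃ := sym f₃ h₃ (Xi X₂) (Xi X₁)
  have hj : lam (brk (brk X₁ X₂) X₃) + lam (brk (brk X₂ X₃) X₁)
      + lam (brk (brk X₃ X₁) X₂) = 0 := by
    rw [← map_add, ← map_add, hjac X₁ X₂ X₃, map_zero]
  linarith [hs₁, hs₂, hs₃, hj]
end

section
/- Let I_h ⊂ U_h be the two-sided ideal generated by Pᵢ − Cᵢ(h), i = 1,…,l, where Pᵢ = Sym(pᵢ) are the Casimir images of generators of the invariant polynomials and Cᵢ(h) ∈ ℂ[[h]] with Cᵢ(0) = cᵢ. Then under the projection U_h → U_h/(h) ≅ Pol(𝔤*), the image of I_h is the vanishing ideal I₀ of the regular orbit set {p₁ = c₁, …, p_l = c_l}. -/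
open MvPolynomial

noncomputable section

abbrev Rh := PowerSeries ℂ

/-- The relation generating the ideal L_h ⊂ T_{ℂ[[h]]}(𝔤):
X_i ⊗ X_j − X_j ⊗ X_i − h[X_i, X_j], written in a basis with structure constants c. -/
def uhRel {n : ℕ} (c : Fin n → Fin n → Fin n → ℂ) :
    FreeAlgebra Rh (Fin n) → FreeAlgebra Rh (Fin n) → Prop :=
  fun a b => ∃ i j : Fin n,
    a = FreeAlgebra.ι Rh i * FreeAlgebra.ι Rh j ∧
    b = FreeAlgebra.ι Rh j * FreeAlgebra.ι Rh i
        + ∑ k, (PowerSeries.X * PowerSeries.C (c i j k)) • FreeAlgebra.ι Rh k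

/-- U_h = T_{ℂ[[h]]}(𝔤)/L_h. -/
def Uh {n : ℕ} (c : Fin n → Fin n → Fin n → ℂ) := RingQuot (uhRel c)

instance {n : ℕ} (c : Fin n → Fin n → Fin n → ℂ) : Ring (Uh c) := by
  unfold Uh; infer_instance

instance {n : ℕ} (c : Fin n → Fin n → Fin n → ℂ) : Algebra Rh (Uh c) := by
  unfold Uh; infer_instance

/-- The generator X_i of U_h. -/
def uhGen {n : ℕ} (c : Fin n → Fin n → Fin n → ℂ) (i : Fin n) : Uh c :=
  RingQuot.mkAlgHom Rh (uhRel c) (FreeAlgebra.ι Rh i)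

/-- The ordered (PBW) monomial X₁^{d₁} ⋯ Xₙ^{dₙ} in U_h. -/
def pbwMonomial {n : ℕ} (c : Fin n → Fin n → Fin n → ℂ) (d : Fin n →₀ ℕ) : Uh c :=
  ((List.finRange n).map fun i => uhGen c i ^ d i).prod

/-- The PBW linear isomorphism candidate Pol(𝔤*)[[h]] → U_h (with Pol(𝔤*)[[h]]
modelled by polynomials with coefficients in ℂ[[h]]), sending an ordered monomial to
the corresponding ordered product of generators. -/
def pbwMap {n : ℕ} (c : Fin n → Fin n → Fin n → ℂ)
    (f : MvPolynomial (Fin n) Rh) : Uh c :=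
  ∑ d ∈ f.support, f.coeff d • pbwMonomial c d

/-- Reduction mod h: specializing the coefficients at h = 0. -/
def epsh {n : ℕ} (f : MvPolynomial (Fin n) Rh) : MvPolynomial (Fin n) ℂ :=
  MvPolynomial.map (PowerSeries.constantCoeff) f

/-- The coefficient of h¹. -/
def coeffOneh {n : ℕ} (f : MvPolynomial (Fin n) Rh) : MvPolynomial (Fin n) ℂ :=
  ∑ d ∈ f.support, MvPolynomial.monomial d (PowerSeries.coeff 1 (f.coeff d))

/-- The Lie–Poisson bracket on Pol(𝔤*) in coordinates. -/
def polPB {n : ℕ} (c : Fin n → Fin n → Fin n → ℂ)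
    (p q : MvPolynomial (Fin n) ℂ) : MvPolynomial (Fin n) ℂ :=
  ∑ i, ∑ j, ∑ k, MvPolynomial.C (c i j k) * X k * pderiv i p * pderiv j q

end

noncomputable section

/-- The symmetrized image in U_h of the monomial with exponents d. -/
def uhSymMonomial {n : ℕ} (c : Fin n → Fin n → Fin n → ℂ) (d : Fin n →₀ ℕ) : Uh c :=
  let lst := (Finsupp.toMultiset d).sort (· ≤ ·)
  PowerSeries.C ((lst.length.factorial : ℂ))⁻¹ •
    ∑ σ : Equiv.Perm (Fin lst.length),
      (List.ofFn fun t : Fin lst.length => uhGen c (lst.get (σ t))).prod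

/-- The symmetrization map Sym : Pol(𝔤*) → U_h. -/
def uhSym {n : ℕ} (c : Fin n → Fin n → Fin n → ℂ) (q : MvPolynomial (Fin n) ℂ) :
    Uh c :=
  ∑ d ∈ q.support, PowerSeries.C (q.coeff d) • uhSymMonomial c d

/-- ℂ[[h]]-algebra structure on Pol(𝔤*) via evaluation of coefficients at h = 0. -/
instance polAlgRh {n : ℕ} : Algebra Rh (MvPolynomial (Fin n) ℂ) :=
  ((MvPolynomial.C : ℂ →+* MvPolynomial (Fin n) ℂ).comp
    (PowerSeries.constantCoeff)).toAlgebra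

/-- The projection U_h → U_h/(h) ≅ Pol(𝔤*), sending the generators Xᵢ to the
coordinates xᵢ and h to 0. -/
def uhProj {n : ℕ} (c : Fin n → Fin n → Fin n → ℂ) :
    Uh c →ₐ[Rh] MvPolynomial (Fin n) ℂ :=
  RingQuot.liftAlgHom Rh
    ⟨FreeAlgebra.lift Rh (fun i => (X i : MvPolynomial (Fin n) ℂ)), by
      rintro x y ⟨i, j, rfl, rfl⟩
      simp [Algebra.smul_def, RingHom.algebraMap_toAlgebra, mul_comm]⟩

end

/-!
Reducing a symmetrized monomial modulo `h` makes all its factors commute, so each of the `k!`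
ordered products maps to the same monomial and `uhProj ∘ uhSym = id`. Hence `uhProj` is surjective,
and a surjection onto a commutative ring maps the two-sided ideal generated by a set onto the ideal
generated by its image; here the generators `Sym pᵢ - Cᵢ(h)` map to `pᵢ - cᵢ`.
-/

theorem TwoSidedIdeal.image_span_of_surjective {R S F : Type*} [Ring R] [CommRing S]
    [FunLike F R S] [RingHomClass F R S] {f : F} (hf : Function.Surjective f) (s : Set R) :
    f '' (TwoSidedIdeal.span s : Set R) = Ideal.span (f '' s) := by
  ext y
  constructor
  · rintro ⟨x, hx, rfl⟩
    have hs : s ⊆ TwoSidedIdeal.comap f (Ideal.span (f '' s)).toTwoSided := fun a ha => by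
      rw [SetLike.mem_coe, mem_comap, Ideal.mem_toTwoSided]
      exact Ideal.subset_span ⟨a, ha, rfl⟩
    simpa [mem_comap, Ideal.mem_toTwoSided] using mem_span_iff.mp hx _ hs
  · intro hy
    have hle : Ideal.span (f '' s) ≤ Ideal.map f (TwoSidedIdeal.span s).asIdeal :=
      Ideal.span_mono (Set.image_mono subset_span)
    obtain ⟨x, hx, rfl⟩ := (Ideal.mem_map_iff_of_surjective f hf).mp (hle hy)
    exact ⟨x, mem_asIdeal.mp hx, rfl⟩

theorem MvPolynomial.prod_map_X_toMultiset {σ R : Type*} [CommSemiring R] (d : σ →₀ ℕ) :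
    ((Finsupp.toMultiset d).map X).prod = monomial d (1 : R) := by
  rw [Finsupp.toMultiset_map, Finsupp.prod_toMultiset,
    Finsupp.prod_mapDomain_index (fun b => pow_zero b) (fun b m₁ m₂ => pow_add b m₁ m₂),
    monomial_eq, map_one, one_mul]

section

variable {n : ℕ} (c : Fin n → Fin n → Fin n → ℂ)

theorem algebraMap_rh_mvPolynomial (r : Rh) :
    algebraMap Rh (MvPolynomial (Fin n) ℂ) r = C (PowerSeries.constantCoeff r) := rfl

theorem uhProj_uhGen (i : Fin n) : uhProj c (uhGen c i) = X i := by
  unfold uhProj uhGen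
  erw [RingQuot.liftAlgHom_mkAlgHom_apply]
  simp

theorem uhProj_uhSymMonomial (d : Fin n →₀ ℕ) :
    uhProj c (uhSymMonomial c d) = monomial d (1 : ℂ) := by
  unfold uhSymMonomial
  set lst := (Finsupp.toMultiset d).sort (· ≤ ·)
  have hperm : ∀ σ : Equiv.Perm (Fin lst.length),
      uhProj c (List.ofFn fun t => uhGen c (lst.get (σ t))).prod = monomial d 1 := by
    intro σ
    calc uhProj c (List.ofFn fun t => uhGen c (lst.get (σ t))).prod
        = ∏ t, (X (lst.get (σ t)) : MvPolynomial (Fin n) ℂ) := by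
          simp [map_list_prod, List.map_ofFn, List.prod_ofFn, Function.comp_def, uhProj_uhGen]
      _ = ∏ t, (X (lst.get t) : MvPolynomial (Fin n) ℂ) :=
          Equiv.prod_comp σ fun t => X (lst.get t)
      _ = (lst.map X).prod := Fin.prod_univ_fun_getElem lst X
      _ = ((Finsupp.toMultiset d).map X).prod := by
          rw [← Multiset.prod_coe, ← Multiset.map_coe, Multiset.sort_eq]
      _ = monomial d 1 := MvPolynomial.prod_map_X_toMultiset d
  have hfact : (lst.length.factorial : ℂ) ≠ 0 := Nat.cast_ne_zero.mpr lst.length.factorial_ne_zero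
  rw [map_smul, map_sum, Finset.sum_congr rfl fun σ _ => hperm σ, Finset.sum_const,
    Finset.card_univ, Fintype.card_perm, Fintype.card_fin, Algebra.smul_def,
    algebraMap_rh_mvPolynomial, PowerSeries.constantCoeff_C, nsmul_eq_mul, ← map_natCast C,
    ← mul_assoc, ← C_mul, inv_mul_cancel₀ hfact, C_1, one_mul]

theorem uhProj_uhSym (q : MvPolynomial (Fin n) ℂ) : uhProj c (uhSym c q) = q := by
  simp only [uhSym, map_sum, map_smul, uhProj_uhSymMonomial]
  simp only [Algebra.smul_def, algebraMap_rh_mvPolynomial, PowerSeries.constantCoeff_C,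
    C_mul_monomial, mul_one]
  exact q.support_sum_monomial_coeff

theorem uhProj_surjective : Function.Surjective (uhProj c) :=
  fun q => ⟨uhSym c q, uhProj_uhSym c q⟩

end

theorem uh_ideal_reduces_to_vanishing_ideal_general {n l : ℕ}
    (c : Fin n → Fin n → Fin n → ℂ)
    (p : Fin l → MvPolynomial (Fin n) ℂ) (cc : Fin l → ℂ) (C : Fin l → Rh)
    (hC : ∀ i, PowerSeries.constantCoeff (C i) = cc i)
    (hI₀ : (Ideal.span (Set.range fun i => p i - MvPolynomial.C (cc i)) :
        Set (MvPolynomial (Fin n) ℂ))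
      = {q | ∀ x : Fin n → ℂ, (∀ i, MvPolynomial.eval x (p i) = cc i) →
          MvPolynomial.eval x q = 0}) :
    uhProj c '' (TwoSidedIdeal.span
        (Set.range fun i => uhSym c (p i) - algebraMap Rh (Uh c) (C i)) : Set (Uh c))
      = {q | ∀ x : Fin n → ℂ, (∀ i, MvPolynomial.eval x (p i) = cc i) →
          MvPolynomial.eval x q = 0} := by
  have hgen : (uhProj c ∘ fun i => uhSym c (p i) - algebraMap Rh (Uh c) (C i))
      = fun i => p i - MvPolynomial.C (cc i) := by
    funext i
    simp [uhProj_uhSym, algebraMap_rh_mvPolynomial, hC]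
  rw [← hI₀, TwoSidedIdeal.image_span_of_surjective (uhProj_surjective c), ← Set.range_comp, hgen]

/-- the image in U_h/(h) ≅ Pol(𝔤*) of the two-sided ideal
I_h = (P₁ − C₁(h), …, P_l − C_l(h)), where Pᵢ = Sym(pᵢ) and Cᵢ(0) = cᵢ, is the
vanishing ideal I₀ of the regular orbit set {p₁ = c₁, …, p_l = c_l} (for a regular
orbit I₀ is the ideal generated by the pᵢ − cᵢ, which we take as given). -/
theorem uh_ideal_reduces_to_vanishing_ideal {L : Type*} [LieRing L] [LieAlgebra ℂ L]
    [Module.Finite ℂ L] {n l : ℕ} (b : Module.Basis (Fin n) ℂ L)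
    (c : Fin n → Fin n → Fin n → ℂ)
    (hc : ∀ i j, ⁅b i, b j⁆ = ∑ k, c i j k • b k)
    (p : Fin l → MvPolynomial (Fin n) ℂ) (cc : Fin l → ℂ) (C : Fin l → Rh)
    (hC : ∀ i, PowerSeries.constantCoeff (C i) = cc i)
    (hI₀ : (Ideal.span (Set.range fun i => p i - MvPolynomial.C (cc i)) :
        Set (MvPolynomial (Fin n) ℂ))
      = {q | ∀ x : Fin n → ℂ, (∀ i, MvPolynomial.eval x (p i) = cc i) →
          MvPolynomial.eval x q = 0}) :
    uhProj c '' (TwoSidedIdeal.span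
        (Set.range fun i => uhSym c (p i) - algebraMap Rh (Uh c) (C i)) : Set (Uh c))
      = {q | ∀ x : Fin n → ℂ, (∀ i, MvPolynomial.eval x (p i) = cc i) →
          MvPolynomial.eval x q = 0} :=
  uh_ideal_reduces_to_vanishing_ideal_general c p cc C hC hI₀
end
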